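/- Let u : ℝ → ℝ be nondecreasing and L-Lipschitz, let x₁,…,xₙ ∈ ℝ^d, and let θ, θ̂ ∈ ℝ^d. Then (1/n)·Σᵢ (u(⟨xᵢ, θ⟩) - u(⟨xᵢ, θ̂⟩))·⟨xᵢ, θ̂ - θ⟩ ≤ -(1/L)·(1/n)·Σᵢ (u(⟨xᵢ, θ̂⟩) - u(⟨xᵢ, θ⟩))². -/
import Mathlib


open scoped RealInnerProductSpace

lemma pointwise_bound (u : ℝ → ℝ) (hu : Monotone u) (L : ℝ) (hL : 0 < L)
    (hLip : ∀ a b, |u a - u b| ≤ L * |a - b|) (a b : ℝ) :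
    (u a - u b) * (b - a) ≤ -(1 / L) * (u b - u a)^2 := by
  have hsign : 0 ≤ (u b - u a) * (b - a) := by
    rcases le_total a b with h | h
    · exact mul_nonneg (by linarith [hu h]) (by linarith)
    · exact mul_nonneg_iff.mpr (Or.inr ⟨by linarith [hu h], by linarith⟩)
  have h1 : |u b - u a| ≤ L * |b - a| := hLip b a
  have h2 : (u b - u a)^2 ≤ L * ((u b - u a) * (b - a)) := by
    have : |u b - u a| * |u b - u a| ≤ (L * |b - a|) * |u b - u a| :=
      mul_le_mul_of_nonneg_right h1 (abs_nonneg _)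
    calc (u b - u a)^2 = |u b - u a| * |u b - u a| := by rw [abs_mul_abs_self]; ring
      _ ≤ L * (|b - a| * |u b - u a|) := by linarith
      _ = L * |(u b - u a) * (b - a)| := by rw [abs_mul]; ring
      _ = L * ((u b - u a) * (b - a)) := by rw [abs_of_nonneg hsign]
  rw [neg_mul, le_neg, div_mul_eq_mul_div, div_le_iff₀ hL]
  nlinarith

/-- The pseudogradient inner product is bounded by the modified empirical error. -/
theorem pseudogradient_bound {d n : ℕ}
    (u : ℝ → ℝ) (hu : Monotone u) (L : ℝ) (hL : 0 < L)
    (hLip : ∀ a b, |u a - u b| ≤ L * |a - b|)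
    (x : Fin n → EuclideanSpace ℝ (Fin d))
    (θ θhat : EuclideanSpace ℝ (Fin d)) :
    (1 / (n : ℝ)) * ∑ i, (u ⟪x i, θ⟫ - u ⟪x i, θhat⟫) * ⟪x i, θhat - θ⟫
      ≤ -(1 / L) * ((1 / (n : ℝ)) * ∑ i, (u ⟪x i, θhat⟫ - u ⟪x i, θ⟫)^2) := by
  have key : ∑ i, (u ⟪x i, θ⟫ - u ⟪x i, θhat⟫) * ⟪x i, θhat - θ⟫
      ≤ ∑ i, -(1 / L) * (u ⟪x i, θhat⟫ - u ⟪x i, θ⟫)^2 := by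
    apply Finset.sum_le_sum
    intro i _
    rw [inner_sub_right]
    exact pointwise_bound u hu L hL hLip _ _
  have hn : (0 : ℝ) ≤ 1 / n := by positivity
  calc (1 / (n : ℝ)) * ∑ i, (u ⟪x i, θ⟫ - u ⟪x i, θhat⟫) * ⟪x i, θhat - θ⟫
      ≤ (1 / (n : ℝ)) * ∑ i, -(1 / L) * (u ⟪x i, θhat⟫ - u ⟪x i, θ⟫)^2 :=
        mul_le_mul_of_nonneg_left key hn
    _ = -(1 / L) * ((1 / (n : ℝ)) * ∑ i, (u ⟪x i, θhat⟫ - u ⟪x i, θ⟫)^2) := by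
        rw [← Finset.mul_sum]; ring
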